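/- Let c > 0 and let Z₁, Z₂, … be i.i.d. real random variables such that Zᵢ − Δ′ is 1-subgaussian for some constant Δ′ ≥ c. Let Sₙ = Z₁ + ⋯ + Zₙ. Then for every a > 0, P(∃ n ≥ 1 : Sₙ ≤ −a) ≤ exp(−2ca). -/

import Mathlib

open MeasureTheory ProbabilityTheory Real
open scoped ENNReal

/-- `W` is 1-subgaussian (mean-zero form): `E[exp(λW)] ≤ exp(λ²/2)` for all
`λ ∈ ℝ` (with the integrability of the moment generating function). -/
def IsOneSubgaussianMGF {Ω : Type*} [MeasurableSpace Ω] (μ : Measure Ω) (W : Ω → ℝ) : Prop :=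
  ∀ l : ℝ, Integrable (fun ω => Real.exp (l * W ω)) μ ∧
    (∫ ω, Real.exp (l * W ω) ∂μ) ≤ Real.exp (l ^ 2 / 2)

/-
With `λ = 2c`, the subgaussian bound gives `E[exp(-λ Zᵢ)] ≤ exp(λ²/2 - λΔ') = exp(2c(c - Δ')) ≤ 1`,
so by independence the products `exp(-λ Sₙ)` form a nonnegative supermartingale. The event
`Sₙ ≤ -a` is the event `exp(-λ Sₙ) ≥ exp(λ a)`, and Ville's maximal inequality (Markov's inequality
at the first time the supermartingale crosses that level, by optional stopping) bounds the
probability that this ever happens by `exp(-λ a)`.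
-/

namespace MeasureTheory.Supermartingale

variable {Ω : Type*} {m0 : MeasurableSpace Ω} {μ : Measure Ω} [IsFiniteMeasure μ]
  {𝒢 : Filtration ℕ m0} {f : ℕ → Ω → ℝ}

theorem maximal_ineq (hf : Supermartingale f 𝒢 μ) (hnonneg : 0 ≤ f) (ε : ℝ) (n : ℕ) :
    ε * μ.real {ω | ∃ k ≤ n, ε ≤ f k ω} ≤ μ[f 0] := by
  set τ : Ω → ℕ∞ := fun ω => (hittingBtwn f {y | ε ≤ y} 0 n ω : ℕ)
  have hτ : IsStoppingTime 𝒢 τ :=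
    hf.stronglyAdapted.adapted.isStoppingTime_hittingBtwn measurableSet_Ici
  have hτn : ∀ ω, τ ω ≤ n := fun ω => WithTop.coe_le_coe.2 (hittingBtwn_le ω)
  have hint : Integrable (stoppedValue f τ) μ := by
    have h := (hf.neg.integrable_stoppedValue hτ hτn).neg
    rwa [show stoppedValue (-f) τ = -stoppedValue f τ from rfl, neg_neg] at h
  have hmeas : MeasurableSet {ω | ∃ k ≤ n, ε ≤ f k ω} := by
    have := fun k => (hf.stronglyAdapted k).measurable.mono (𝒢.le k) le_rfl
    measurability
  have hstop : μ[stoppedValue f τ] ≤ μ[f 0] := by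
    have := hf.neg.expected_stoppedValue_mono (isStoppingTime_const 𝒢 0) hτ
      (fun _ => zero_le) hτn
    simpa [stoppedValue, integral_neg] using this
  calc ε * μ.real {ω | ∃ k ≤ n, ε ≤ f k ω}
      ≤ ∫ ω in {ω | ∃ k ≤ n, ε ≤ f k ω}, stoppedValue f τ ω ∂μ :=
        setIntegral_ge_of_const_le_real hmeas (measure_ne_top _ _)
          (fun ω ⟨k, hk, hεk⟩ => stoppedValue_hittingBtwn_mem ⟨k, ⟨Nat.zero_le _, hk⟩, hεk⟩)
          hint.integrableOn
    _ ≤ μ[stoppedValue f τ] :=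
        setIntegral_le_integral hint (Filter.Eventually.of_forall fun ω => hnonneg _ ω)
    _ ≤ μ[f 0] := hstop

theorem measure_exists_ge_le (hf : Supermartingale f 𝒢 μ) (hnonneg : 0 ≤ f) {ε : ℝ}
    (hε : 0 < ε) : μ {ω | ∃ k, ε ≤ f k ω} ≤ ENNReal.ofReal (μ[f 0] / ε) := by
  have hunion : {ω | ∃ k, ε ≤ f k ω} = ⋃ n, {ω | ∃ k ≤ n, ε ≤ f k ω} := by
    ext ω
    simp only [Set.mem_iUnion]
    exact ⟨fun ⟨k, h⟩ => ⟨k, k, le_rfl, h⟩, fun ⟨_, k, _, h⟩ => ⟨k, h⟩⟩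
  have hmono : Monotone fun n => {ω | ∃ k ≤ n, ε ≤ f k ω} :=
    fun i j hij ω ⟨k, hk, h⟩ => ⟨k, hk.trans hij, h⟩
  rw [hunion, hmono.measure_iUnion]
  refine iSup_le fun n => ?_
  rw [← ofReal_measureReal]
  exact ENNReal.ofReal_le_ofReal <| (le_div_iff₀' hε).2 (hf.maximal_ineq hnonneg ε n)

end MeasureTheory.Supermartingale

theorem ProbabilityTheory.iIndepFun.supermartingale_prod_range_succ {Ω : Type*}
    {m0 : MeasurableSpace Ω} {μ : Measure Ω} {X : ℕ → Ω → ℝ}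
    (hX : ∀ i, StronglyMeasurable (X i)) (hindep : iIndepFun X μ)
    (hint : ∀ i, Integrable (X i) μ) (hle : ∀ i, μ[X i] ≤ 1) (hnonneg : ∀ i, 0 ≤ X i) :
    Supermartingale (fun n => ∏ i ∈ Finset.range (n + 1), X i) (Filtration.natural X hX) μ := by
  have := hindep.isProbabilityMeasure
  set M : ℕ → Ω → ℝ := fun n => ∏ i ∈ Finset.range (n + 1), X i
  have hM_succ : ∀ n, M (n + 1) = M n * X (n + 1) := fun n => Finset.prod_range_succ _ _
  have hadapted : StronglyAdapted (Filtration.natural X hX) M := fun n =>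
    Finset.stronglyMeasurable_prod _ fun i hi =>
      (Filtration.stronglyAdapted_natural hX i).mono
        ((Filtration.natural X hX).mono (Nat.lt_succ_iff.1 (Finset.mem_range.1 hi)))
  have hMint : ∀ n, Integrable (M n) μ := by
    intro n
    induction n with
    | zero => simpa [M] using hint 0
    | succ n ih =>
      rw [hM_succ]
      exact (hindep.indepFun_prod_range_succ (fun i => (hX i).measurable) (n + 1)).integrable_mul
        ih (hint _)
  refine supermartingale_nat hadapted hMint fun n => ?_
  have hfactor : μ[M (n + 1)|Filtration.natural X hX n] =ᵐ[μ]
      M n * μ[X (n + 1)|Filtration.natural X hX n] := by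
    rw [hM_succ]
    exact condExp_mul_of_stronglyMeasurable_left (hadapted n) (hM_succ n ▸ hMint _) (hint _)
  filter_upwards [hfactor, hindep.condExp_natural_ae_eq_of_lt hX (Nat.lt_succ_self n)]
    with ω hω hω'
  rw [hω, Pi.mul_apply, hω']
  exact mul_le_of_le_one_right (Finset.prod_nonneg (fun i _ => hnonneg i) ω) (hle _)

lemma exp_mul_eq_exp_mul_sub_mul_exp {Ω : Type*} (Z : Ω → ℝ) (t Δ : ℝ) :
    (fun ω => exp (t * Z ω)) = fun ω => exp (t * (Z ω - Δ)) * exp (t * Δ) := by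
  ext ω; rw [← exp_add]; ring_nf

namespace IsOneSubgaussianMGF

variable {Ω : Type*} [MeasurableSpace Ω] {μ : Measure Ω} {Z : Ω → ℝ} {Δ : ℝ}

theorem integrable_exp_mul_of_sub_const (h : IsOneSubgaussianMGF μ fun ω => Z ω - Δ) (t : ℝ) :
    Integrable (fun ω => exp (t * Z ω)) μ := by
  rw [exp_mul_eq_exp_mul_sub_mul_exp Z t Δ]
  exact (h t).1.mul_const _

theorem integral_exp_mul_le_of_sub_const (h : IsOneSubgaussianMGF μ fun ω => Z ω - Δ) (t : ℝ) :
    ∫ ω, exp (t * Z ω) ∂μ ≤ exp (t ^ 2 / 2 + t * Δ) := by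
  rw [exp_mul_eq_exp_mul_sub_mul_exp Z t Δ, integral_mul_const, exp_add]
  exact mul_le_mul_of_nonneg_right (h t).2 (exp_pos _).le

end IsOneSubgaussianMGF

theorem stmt13_general {Ω : Type*} [MeasurableSpace Ω] (μ : Measure Ω) [IsProbabilityMeasure μ]
    (Z : ℕ → Ω → ℝ) (hmeas : ∀ i, Measurable (Z i))
    (hindep : iIndepFun Z μ)
    (c : ℝ) (hc : 0 < c)
    (Δ' : ℝ) (hΔ' : c ≤ Δ')
    (hsub : ∀ i, IsOneSubgaussianMGF μ (fun ω => Z i ω - Δ'))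
    (a : ℝ) :
    μ {ω | ∃ n : ℕ, 1 ≤ n ∧ (∑ i ∈ Finset.range n, Z i ω) ≤ -a} ≤
      ENNReal.ofReal (Real.exp (-(2 * c * a))) := by
  set X : ℕ → Ω → ℝ := fun i ω => exp (-(2 * c) * Z i ω)
  have hX : ∀ i, StronglyMeasurable (X i) := fun i =>
    (measurable_exp.comp ((hmeas i).const_mul _)).stronglyMeasurable
  have hXle : ∀ i, μ[X i] ≤ 1 := fun i =>
    ((hsub i).integral_exp_mul_le_of_sub_const _).trans (exp_le_one_iff.2 (by nlinarith))
  have hXindep : iIndepFun X μ := hindep.comp (fun _ x => exp (-(2 * c) * x)) fun _ => by fun_prop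
  have hM := hXindep.supermartingale_prod_range_succ hX
    (fun i => (hsub i).integrable_exp_mul_of_sub_const _) hXle fun i ω => (exp_pos _).le
  calc μ {ω | ∃ n : ℕ, 1 ≤ n ∧ (∑ i ∈ Finset.range n, Z i ω) ≤ -a}
      ≤ μ {ω | ∃ n, exp (2 * c * a) ≤ (∏ i ∈ Finset.range (n + 1), X i) ω} := by
        refine measure_mono fun ω ⟨n, hn, hS⟩ => ?_
        obtain ⟨m, rfl⟩ := Nat.exists_eq_add_of_le' hn
        refine ⟨m, ?_⟩
        rw [Finset.prod_apply, ← exp_sum, ← Finset.mul_sum]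
        exact exp_le_exp.2 (by nlinarith)
    _ ≤ ENNReal.ofReal (μ[X 0] / exp (2 * c * a)) := by
        simpa only [zero_add, Finset.prod_range_one] using
          hM.measure_exists_ge_le (fun n => Finset.prod_nonneg fun i _ ω => (exp_pos _).le)
            (exp_pos _)
    _ ≤ ENNReal.ofReal (exp (-(2 * c * a))) := by
        refine ENNReal.ofReal_le_ofReal ?_
        rw [exp_neg, ← one_div]
        exact div_le_div_of_nonneg_right (hXle 0) (exp_pos _).le

/-- Let `c > 0` and let `Z₁, Z₂, …` be i.i.d. with `Zᵢ − Δ′` 1-subgaussian for some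
constant `Δ′ ≥ c`, and `Sₙ = Z₁ + ⋯ + Zₙ`.  Then for every `a > 0`,
`P(∃ n ≥ 1 : Sₙ ≤ −a) ≤ exp(−2ca)`. -/
theorem stmt13 {Ω : Type*} [MeasurableSpace Ω] (μ : Measure Ω) [IsProbabilityMeasure μ]
    (Z : ℕ → Ω → ℝ) (hmeas : ∀ i, Measurable (Z i))
    (hindep : iIndepFun Z μ)
    (hident : ∀ i, IdentDistrib (Z i) (Z 0) μ μ)
    (c : ℝ) (hc : 0 < c)
    (Δ' : ℝ) (hΔ' : c ≤ Δ')
    (hsub : ∀ i, IsOneSubgaussianMGF μ (fun ω => Z i ω - Δ'))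
    (a : ℝ) (ha : 0 < a) :
    μ {ω | ∃ n : ℕ, 1 ≤ n ∧ (∑ i ∈ Finset.range n, Z i ω) ≤ -a} ≤
      ENNReal.ofReal (Real.exp (-(2 * c * a))) :=
  stmt13_general μ Z hmeas hindep c hc Δ' hΔ' hsub a
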